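/- If f is a nonzero non-negative integral circulation on a finite undirected graph, then the support of f contains a cycle; consequently there exists a non-negative unit cycle flow C with supp(C) contained in supp(f). -/

import Mathlib

open Finset

/-- Flow conservation at every vertex: an integral circulation on a graph whose
edges are given a reference orientation by `src` and `tgt`. -/
def IsCirculation {V E : Type} [Fintype E] [DecidableEq V] (src tgt : E → V) (f : E → ℤ) : Prop :=
  ∀ v : V, ∑ e : E, (if tgt e = v then f e else 0) = ∑ e : E, (if src e = v then f e else 0)

/-- Two vertices are adjacent via an edge in `S` (edges viewed as undirected). -/
def EdgeAdj {V E : Type} (src tgt : E → V) (S : Set E) (a b : V) : Prop :=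
  ∃ e ∈ S, (src e = a ∧ tgt e = b) ∨ (src e = b ∧ tgt e = a)

/-- Reachability using only edges in `S`. -/
def Reach {V E : Type} (src tgt : E → V) (S : Set E) : V → V → Prop :=
  Relation.ReflTransGen (EdgeAdj src tgt S)

/-- The (multi)graph is connected. -/
def GraphConnected {V E : Type} (src tgt : E → V) : Prop :=
  ∀ a b : V, Reach src tgt Set.univ a b

/-- `v` is an endpoint of some edge in `S`. -/
def Touches {V E : Type} (src tgt : E → V) (S : Set E) (v : V) : Prop :=
  ∃ e ∈ S, src e = v ∨ tgt e = v

/-- The edge set `S` induces a connected subgraph (on the vertices it touches). -/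
def ConnectedOn {V E : Type} (src tgt : E → V) (S : Set E) : Prop :=
  ∀ a b : V, Touches src tgt S a → Touches src tgt S b → Reach src tgt S a b

/-- Degree of `v` in the support of `f` (loops counted twice). -/
def suppDegree {V E : Type} [Fintype E] [DecidableEq V] (src tgt : E → V) (f : E → ℤ) (v : V) : ℕ :=
  (univ.filter fun e => f e ≠ 0 ∧ src e = v).card +
  (univ.filter fun e => f e ≠ 0 ∧ tgt e = v).card

/-- A cycle flow: a circulation whose support forms a single (undirected) cycle.
The support is nonempty, connected, and every vertex it touches has degree 2 in it. -/
def IsCycleFlow {V E : Type} [Fintype E] [DecidableEq V] (src tgt : E → V) (f : E → ℤ) : Prop :=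
  IsCirculation src tgt f ∧ (∃ e, f e ≠ 0) ∧
    ConnectedOn src tgt {e | f e ≠ 0} ∧
    ∀ v : V, Touches src tgt {e | f e ≠ 0} v → suppDegree src tgt f v = 2

/-- A unit cycle flow: a cycle flow with values in `{-1, 0, 1}`. -/
def IsUnitCycleFlow {V E : Type} [Fintype E] [DecidableEq V] (src tgt : E → V) (f : E → ℤ) : Prop :=
  IsCycleFlow src tgt f ∧ ∀ e, f e = 0 ∨ f e = 1 ∨ f e = -1

/-- `f` contains `g`: on every edge, `|g e| ≤ |f e|` and they have the same sign
whenever `g e ≠ 0`. -/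
def FlowContains {E : Type} (f g : E → ℤ) : Prop :=
  ∀ e, |g e| ≤ |f e| ∧ (g e ≠ 0 → 0 < g e * f e)

/-- A circulation is elementary if it does not contain twice a unit cycle flow. -/
def IsElementary {V E : Type} [Fintype E] [DecidableEq V] (src tgt : E → V) (f : E → ℤ) : Prop :=
  ¬ ∃ C : E → ℤ, IsUnitCycleFlow src tgt C ∧ FlowContains f (fun e => 2 * C e)

/-- `T` is a spanning tree: its edges connect all vertices and `|T| = |V| - 1`. -/
def IsSpanningTree {V E : Type} [Fintype V] [Fintype E] [DecidableEq V] [DecidableEq E]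
    (src tgt : E → V) (T : Finset E) : Prop :=
  (∀ a b : V, Reach src tgt ↑T a b) ∧ T.card + 1 = Fintype.card V

/-- Number of connected components of the subgraph on all of `V` using edges of `S`. -/
noncomputable def numComponents {V E : Type} (src tgt : E → V) (S : Set E) : ℕ :=
  Nat.card (Quot (Reach src tgt S))

/-!
At a vertex entered by a support edge of a non-negative circulation the inflow is positive, so
some support edge leaves it. Choosing such an outgoing edge `out v` at every vertex that has one
gives a successor map `tgt ∘ out` on the finite vertex set, which has a periodic point. The edges
chosen along its periodic orbit carry a unit cycle flow: the successor map permutes the orbit,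
so every orbit vertex has exactly one chosen edge entering and one leaving it.
-/

open Function

section PeriodicOrbit

variable {α : Type*}

theorem Function.exists_iterate_mem_periodicPts [Finite α] (f : α → α) (x : α) :
    ∃ n, f^[n] x ∈ periodicPts f := by
  obtain ⟨i, j, hij, h⟩ := Finite.exists_ne_map_eq_of_infinite fun n => f^[n] x
  wlog hlt : i < j generalizing i j
  · exact this j i hij.symm h.symm (hij.symm.lt_of_le (not_lt.1 hlt))
  refine ⟨i, mk_mem_periodicPts (Nat.sub_pos_of_lt hlt) ?_⟩
  change f^[j - i] (f^[i] x) = f^[i] x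
  rw [← iterate_add_apply, Nat.sub_add_cancel hlt.le]
  exact h.symm

variable [DecidableEq α] {f : α → α} {x y : α}

noncomputable def Function.periodicOrbitFinset (f : α → α) (x : α) : Finset α :=
  (range (minimalPeriod f x)).image fun n => f^[n] x

theorem Function.mem_periodicOrbitFinset (hx : x ∈ periodicPts f) :
    y ∈ periodicOrbitFinset f x ↔ ∃ n, f^[n] x = y := by
  simp only [periodicOrbitFinset, mem_image, mem_range]
  refine ⟨fun ⟨n, _, hn⟩ => ⟨n, hn⟩, fun ⟨n, hn⟩ => ?_⟩
  exact ⟨n % minimalPeriod f x, Nat.mod_lt _ (minimalPeriod_pos_of_mem_periodicPts hx),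
    by rw [iterate_mod_minimalPeriod_eq, hn]⟩

theorem Function.apply_mem_periodicOrbitFinset (hx : x ∈ periodicPts f)
    (hy : y ∈ periodicOrbitFinset f x) : f y ∈ periodicOrbitFinset f x := by
  obtain ⟨n, rfl⟩ := (mem_periodicOrbitFinset hx).1 hy
  exact (mem_periodicOrbitFinset hx).2 ⟨n + 1, iterate_succ_apply' f n x⟩

/-- `f` permutes the periodic orbit of `x`. -/
theorem Function.card_filter_apply_eq_periodicOrbitFinset (hx : x ∈ periodicPts f) (y : α) :
    #((periodicOrbitFinset f x).filter (f · = y)) =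
      #((periodicOrbitFinset f x).filter (· = y)) := by
  obtain ⟨k, hk, hxk⟩ := mem_periodicPts.1 hx
  have hperiodic : ∀ z ∈ periodicOrbitFinset f x, IsPeriodicPt f k z := fun z hz => by
    obtain ⟨n, rfl⟩ := (mem_periodicOrbitFinset hx).1 hz
    exact hxk.apply_iterate n
  refine card_nbij f (fun z hz => ?_) (fun z hz z' hz' h => ?_) (fun z hz => ?_)
  · obtain ⟨hzx, rfl⟩ := mem_filter.1 hz
    exact mem_filter.2 ⟨apply_mem_periodicOrbitFinset hx hzx, rfl⟩
  · exact (hperiodic z (mem_filter.1 hz).1).eq_of_apply_eq_same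
      (hperiodic z' (mem_filter.1 hz').1) hk h
  · obtain ⟨hzx, rfl⟩ := mem_filter.1 hz
    have hpred : f (f^[k - 1] z) = z := by
      rw [← iterate_succ_apply' f, Nat.succ_eq_add_one, Nat.sub_add_cancel hk]
      exact hperiodic z hzx
    refine ⟨f^[k - 1] z, ?_, hpred⟩
    obtain ⟨n, rfl⟩ := (mem_periodicOrbitFinset hx).1 hzx
    exact mem_filter.2
      ⟨(mem_periodicOrbitFinset hx).2 ⟨k - 1 + n, iterate_add_apply f _ _ x⟩, hpred⟩

end PeriodicOrbit

theorem IsCirculation.exists_supp_src_eq_tgt {V E : Type} [Fintype E] [DecidableEq V]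
    {src tgt : E → V} {f : E → ℤ} (hf : IsCirculation src tgt f) (hnonneg : ∀ e, 0 ≤ f e)
    {e : E} (he : f e ≠ 0) : ∃ e', f e' ≠ 0 ∧ src e' = tgt e := by
  by_contra! hnone
  have hout : ∑ e' : E, (if src e' = tgt e then f e' else 0) = 0 :=
    sum_eq_zero fun e' _ => ite_eq_right_iff.2 fun h => not_not.1 fun h' => hnone e' h' h
  have hin : f e ≤ ∑ e' : E, (if tgt e' = tgt e then f e' else 0) := by
    simpa using single_le_sum (f := fun e' => if tgt e' = tgt e then f e' else 0)
      (fun e' _ => by split_ifs <;> simp [hnonneg]) (mem_univ e)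
  have hpos : 0 < f e := (hnonneg e).lt_of_ne' he
  have := hf (tgt e)
  omega

instance {V E : Type} (src tgt : E → V) (S : Set E) : Std.Symm (EdgeAdj src tgt S) :=
  ⟨fun _ _ ⟨e, he, h⟩ => ⟨e, he, h.symm⟩⟩

theorem Reach.symm {V E : Type} {src tgt : E → V} {S : Set E} {a b : V}
    (h : Reach src tgt S a b) : Reach src tgt S b a :=
  Std.Symm.symm (r := Relation.ReflTransGen (EdgeAdj src tgt S)) a b h

section OrbitCycle

variable {V E : Type} [DecidableEq V] [DecidableEq E] (src tgt : E → V) (out : V → E) (p : V)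

noncomputable def orbitEdges : Finset E := (periodicOrbitFinset (tgt ∘ out) p).image out

noncomputable def orbitCycle (e : E) : ℤ := if e ∈ orbitEdges tgt out p then 1 else 0

variable {src tgt out p}

theorem orbitCycle_ne_zero_iff {e : E} :
    orbitCycle tgt out p e ≠ 0 ↔ e ∈ orbitEdges tgt out p := by
  unfold orbitCycle; split_ifs with h <;> simp [h]

theorem orbitCycle_nonneg (e : E) : 0 ≤ orbitCycle tgt out p e := by
  unfold orbitCycle; split_ifs <;> simp

theorem orbitCycle_eq_zero_or_one (e : E) :
    orbitCycle tgt out p e = 0 ∨ orbitCycle tgt out p e = 1 := by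
  unfold orbitCycle; split_ifs <;> simp

theorem sum_ite_orbitCycle [Fintype E] (g : E → V) (u : V) :
    ∑ e, (if g e = u then orbitCycle tgt out p e else 0) =
      #((orbitEdges tgt out p).filter (g · = u)) := by
  simp only [orbitCycle, ← ite_and, sum_boole]
  congr 2
  ext e
  simp [and_comm]

variable (hp : p ∈ periodicPts (tgt ∘ out))
  (hsrc : ∀ w ∈ periodicOrbitFinset (tgt ∘ out) p, src (out w) = w)
include hsrc

theorem card_filter_orbitEdges (g : E → V) (u : V) :
    #((orbitEdges tgt out p).filter (g · = u)) =
      #((periodicOrbitFinset (tgt ∘ out) p).filter fun w => g (out w) = u) := by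
  rw [orbitEdges, filter_image, card_image_of_injOn]
  intro w hw w' hw' h
  rw [← hsrc w (mem_filter.1 hw).1, ← hsrc w' (mem_filter.1 hw').1, h]

theorem card_filter_src_orbitEdges (u : V) :
    #((orbitEdges tgt out p).filter (src · = u)) =
      #((periodicOrbitFinset (tgt ∘ out) p).filter (· = u)) := by
  rw [card_filter_orbitEdges hsrc]
  exact congrArg card (filter_congr fun w hw => by rw [hsrc w hw])

include hp

theorem card_filter_tgt_orbitEdges (u : V) :
    #((orbitEdges tgt out p).filter (tgt · = u)) =
      #((periodicOrbitFinset (tgt ∘ out) p).filter (· = u)) :=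
  (card_filter_orbitEdges hsrc tgt u).trans (card_filter_apply_eq_periodicOrbitFinset hp u)

theorem isCirculation_orbitCycle [Fintype E] : IsCirculation src tgt (orbitCycle tgt out p) :=
  fun u => by
    rw [sum_ite_orbitCycle, sum_ite_orbitCycle, card_filter_tgt_orbitEdges hp hsrc,
      card_filter_src_orbitEdges hsrc]

theorem mem_periodicOrbitFinset_of_touches {u : V}
    (hu : Touches src tgt {e | orbitCycle tgt out p e ≠ 0} u) :
    u ∈ periodicOrbitFinset (tgt ∘ out) p := by
  obtain ⟨e, he, hsrc_tgt⟩ := hu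
  obtain ⟨w, hw, rfl⟩ := mem_image.1 (orbitCycle_ne_zero_iff.1 he)
  rcases hsrc_tgt with rfl | rfl
  · rwa [hsrc w hw]
  · exact apply_mem_periodicOrbitFinset hp hw

theorem suppDegree_orbitCycle [Fintype E] {u : V}
    (hu : u ∈ periodicOrbitFinset (tgt ∘ out) p) :
    suppDegree src tgt (orbitCycle tgt out p) u = 2 := by
  have hedges (g : E → V) : (univ.filter fun e => orbitCycle tgt out p e ≠ 0 ∧ g e = u) =
      (orbitEdges tgt out p).filter (g · = u) := by
    ext e; simp [orbitCycle_ne_zero_iff]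
  rw [suppDegree, hedges, hedges, card_filter_tgt_orbitEdges hp hsrc,
    card_filter_src_orbitEdges hsrc, filter_eq', if_pos hu, card_singleton]

theorem reach_orbitCycle_iterate (n : ℕ) :
    Reach src tgt {e | orbitCycle tgt out p e ≠ 0} p ((tgt ∘ out)^[n] p) := by
  induction n with
  | zero => exact Relation.ReflTransGen.refl
  | succ n ih =>
    have hw := (mem_periodicOrbitFinset hp).2 ⟨n, rfl⟩
    refine ih.tail ⟨out ((tgt ∘ out)^[n] p), ?_, Or.inl ⟨hsrc _ hw, ?_⟩⟩
    · exact orbitCycle_ne_zero_iff.2 (mem_image_of_mem out hw)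
    · exact (iterate_succ_apply' (tgt ∘ out) n p).symm

theorem connectedOn_orbitCycle : ConnectedOn src tgt {e | orbitCycle tgt out p e ≠ 0} := by
  have hreach {u} (hu : Touches src tgt {e | orbitCycle tgt out p e ≠ 0} u) :
      Reach src tgt {e | orbitCycle tgt out p e ≠ 0} p u := by
    obtain ⟨n, rfl⟩ :=
      (mem_periodicOrbitFinset hp).1 (mem_periodicOrbitFinset_of_touches hp hsrc hu)
    exact reach_orbitCycle_iterate hp hsrc n
  exact fun a b ha hb => (hreach ha).symm.trans (hreach hb)

theorem isUnitCycleFlow_orbitCycle [Fintype E] :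
    IsUnitCycleFlow src tgt (orbitCycle tgt out p) := by
  refine ⟨⟨isCirculation_orbitCycle hp hsrc, ⟨out p, ?_⟩, connectedOn_orbitCycle hp hsrc,
    fun u hu => suppDegree_orbitCycle hp hsrc (mem_periodicOrbitFinset_of_touches hp hsrc hu)⟩,
    fun e => (orbitCycle_eq_zero_or_one e).imp_right Or.inl⟩
  exact orbitCycle_ne_zero_iff.2
    (mem_image_of_mem out ((mem_periodicOrbitFinset hp).2 ⟨0, rfl⟩))

end OrbitCycle

/-- The support of a nonzero non-negative circulation contains a cycle: there is a
non-negative unit cycle flow supported inside `supp f`. -/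
theorem nonneg_circulation_contains_cycle {V E : Type} [Fintype V] [Fintype E]
    [DecidableEq V] [DecidableEq E]
    (src tgt : E → V)
    (f : E → ℤ) (hf : IsCirculation src tgt f)
    (hnonneg : ∀ e, 0 ≤ f e) (hne : f ≠ 0) :
    ∃ C : E → ℤ, IsUnitCycleFlow src tgt C ∧ (∀ e, 0 ≤ C e) ∧
      ∀ e, C e ≠ 0 → f e ≠ 0 := by
  obtain ⟨e₀, he₀⟩ := Function.ne_iff.1 hne
  set W : Set V := {v | ∃ e, f e ≠ 0 ∧ src e = v}
  choose out hout using fun v => show ∃ e, v ∈ W → f e ≠ 0 ∧ src e = v from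
    if hv : v ∈ W then hv.imp fun _ he _ => he else ⟨e₀, fun h => absurd h hv⟩
  have hW : Set.MapsTo (tgt ∘ out) W W := fun v hv =>
    hf.exists_supp_src_eq_tgt hnonneg (hout v hv).1
  obtain ⟨n, hp⟩ := exists_iterate_mem_periodicPts (tgt ∘ out) (src e₀)
  have horbit :
      ∀ w ∈ periodicOrbitFinset (tgt ∘ out) ((tgt ∘ out)^[n] (src e₀)), w ∈ W := by
    intro w hw
    obtain ⟨m, rfl⟩ := (mem_periodicOrbitFinset hp).1 hw
    rw [← iterate_add_apply]
    exact hW.iterate _ ⟨e₀, he₀, rfl⟩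
  refine ⟨_, isUnitCycleFlow_orbitCycle hp fun w hw => (hout w (horbit w hw)).2,
    orbitCycle_nonneg, fun e he => ?_⟩
  obtain ⟨w, hw, rfl⟩ := mem_image.1 (orbitCycle_ne_zero_iff.1 he)
  exact (hout w (horbit w hw)).1
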